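/- arXiv:2204.03302 — 3 statements merged into one kernel-verified Lean document; each statement's English description precedes it below -/
import Mathlib

section
/- Let H be a complex Hilbert space and let F : H → H be a compact bounded linear operator that is normal (F ∘ F* = F* ∘ F). Then for every real number μ > 0, μ is an eigenvalue of F* ∘ F (i.e. there exists v ≠ 0 with (F*∘F)v = μ v) if and only if there exists λ ∈ ℂ with |λ|² = μ such that λ is an eigenvalue of F (i.e. F w = λ w for some w ≠ 0). -/
/-!
If `F w = λ w`, normality of `F` gives `F* w = conj λ • w` (the operator `F - λ` is again normal,
so `F - λ` and its adjoint have the same kernel), hence `F* F w = |λ|² w`. Conversely, since `F`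
commutes with `F* F`, it maps the `μ`-eigenspace of `F* F` into itself; for `μ ≠ 0` this
eigenspace is finite-dimensional by compactness, so `F` has an eigenvector `w` in it, and then
`μ w = F* F w = |λ|² w`.
-/

section

open ContinuousLinearMap Module Module.End
open scoped ComplexConjugate

instance IsStarNormal.sub_algebraMap {R A : Type*} [CommSemiring R] [StarRing R] [Ring A]
    [StarRing A] [Algebra R A] [StarModule R A] (a : A) [ha : IsStarNormal a] (r : R) :
    IsStarNormal (a - algebraMap R A r) := by
  refine ⟨?_⟩
  rw [star_sub, ← algebraMap_star_comm]
  exact (ha.star_comm_self.sub_left (Algebra.commute_algebraMap_left _ _)).sub_right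
    ((Algebra.commute_algebraMap_right _ _).sub_left (Algebra.commute_algebraMap_left _ _))

lemma Module.End.exists_hasEigenvector_mem_of_mapsTo {K V : Type*} [Field K] [IsAlgClosed K]
    [AddCommGroup V] [Module K V] (f : End K V) (p : Submodule K V) [FiniteDimensional K p]
    [Nontrivial p] (hp : Set.MapsTo f p p) : ∃ c w, w ∈ p ∧ f.HasEigenvector c w := by
  obtain ⟨c, hc⟩ := exists_eigenvalue (f.restrict hp)
  obtain ⟨w, hw⟩ := hc.exists_hasEigenvector
  exact ⟨c, w, w.2, hasEigenvector_iff.mpr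
    ⟨mem_eigenspace_iff.mpr (congrArg Subtype.val hw.apply_eq_smul), by simpa using hw.2⟩⟩

variable {𝕜 E : Type*} [RCLike 𝕜] [NormedAddCommGroup E] [InnerProductSpace 𝕜 E] [CompleteSpace E]

lemma ContinuousLinearMap.IsStarNormal.adjoint_apply_eq_of_apply_eq_smul {T : E →L[𝕜] E}
    [IsStarNormal T] {c : 𝕜} {x : E} (hx : T x = c • x) : adjoint T x = conj c • x := by
  have h := (IsStarNormal.sub_algebraMap T c).adjoint_apply_eq_zero_iff x
  simp only [← star_eq_adjoint, star_sub, ← algebraMap_star_comm] at h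
  simpa [sub_eq_zero, hx, star_eq_adjoint] using h

lemma ContinuousLinearMap.IsStarNormal.adjoint_comp_apply_of_apply_eq_smul {T : E →L[𝕜] E}
    [IsStarNormal T] {c : 𝕜} {x : E} (hx : T x = c • x) :
    (adjoint T ∘L T) x = ((‖c‖ ^ 2 : ℝ) : 𝕜) • x := by
  rw [comp_apply, hx, map_smul, adjoint_apply_eq_of_apply_eq_smul hx, smul_smul,
    RCLike.mul_conj]
  norm_cast

lemma ContinuousLinearMap.IsStarNormal.exists_apply_eq_smul_of_adjoint_comp_apply_eq_smul
    {H : Type*} [NormedAddCommGroup H] [InnerProductSpace ℂ H] [CompleteSpace H]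
    {F : H →L[ℂ] H} [IsStarNormal F] (hF : IsCompactOperator F) {μ : ℂ} (hμ : μ ≠ 0) {v : H}
    (hv : v ≠ 0) (hFv : (adjoint F ∘L F) v = μ • v) :
    ∃ c : ℂ, ((‖c‖ ^ 2 : ℝ) : ℂ) = μ ∧ ∃ w : H, w ≠ 0 ∧ F w = c • w := by
  set T := adjoint F ∘L F
  have hT : IsCompactOperator T := hF.clm_comp (adjoint F)
  have := T.finite_dimensional_eigenspace hT μ hμ
  have : Nontrivial (eigenspace (T : End ℂ H) μ) := Submodule.nontrivial_iff_ne_bot.mpr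
    (hasEigenvalue_of_hasEigenvector ⟨mem_eigenspace_iff.mpr hFv, hv⟩)
  have hcomm : Commute (T : End ℂ H) F := by
    have hTF : Commute T F := (IsStarNormal.star_comm_self (x := F)).mul_left (Commute.refl F)
    exact hTF.map toLinearMapRingHom
  obtain ⟨c, w, hwT, hw⟩ := exists_hasEigenvector_mem_of_mapsTo (F : End ℂ H) _
    (mapsTo_genEigenspace_of_comm hcomm μ 1)
  refine ⟨c, ?_, w, hw.2, hw.apply_eq_smul⟩
  have hμw : μ • w = ((‖c‖ ^ 2 : ℝ) : ℂ) • w := (mem_eigenspace_iff.mp hwT).symm.trans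
    (adjoint_comp_apply_of_apply_eq_smul hw.apply_eq_smul)
  exact (smul_left_injective ℂ hw.2 hμw).symm

end

/-- For a compact normal operator `F` on a complex Hilbert space and `μ > 0`:
`μ` is an eigenvalue of `F* ∘ F` iff `μ = |λ|²` for some eigenvalue `λ` of `F`. -/
theorem stmt_5 {H : Type*} [NormedAddCommGroup H] [InnerProductSpace ℂ H] [CompleteSpace H]
    (F : H →L[ℂ] H) (hcomp : IsCompactOperator F)
    (hF : F ∘L ContinuousLinearMap.adjoint F = ContinuousLinearMap.adjoint F ∘L F)
    (μ : ℝ) (hμ : 0 < μ) :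
    (∃ v : H, v ≠ 0 ∧ (ContinuousLinearMap.adjoint F ∘L F) v = (μ : ℂ) • v) ↔
      (∃ lam : ℂ, ‖lam‖ ^ 2 = μ ∧ ∃ w : H, w ≠ 0 ∧ F w = lam • w) := by
  have : IsStarNormal F := ⟨hF.symm⟩
  constructor
  · rintro ⟨v, hv, hFv⟩
    obtain ⟨c, hc, w, hw, hFw⟩ :=
      ContinuousLinearMap.IsStarNormal.exists_apply_eq_smul_of_adjoint_comp_apply_eq_smul hcomp
        (by exact_mod_cast hμ.ne') hv hFv
    exact ⟨c, by exact_mod_cast hc, w, hw, hFw⟩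
  · rintro ⟨c, rfl, w, hw, hFw⟩
    exact ⟨w, hw, ContinuousLinearMap.IsStarNormal.adjoint_comp_apply_of_apply_eq_smul hFw⟩
end

section
/- Let μ > 0, λ ∈ ℝ with λ + μ > 0, ω > 0, κ_p = ω/√(λ+2μ), κ_s = ω/√μ. Let f_p, f_s : S² → ℂ³ be continuous functions such that for every α ∈ S², f_p(α) is a complex scalar multiple of α and f_s(α)·α = 0. Then the elastic Herglotz wave u_f(x) = ∫_{S²} [ exp(i κ_p α·x) f_p(α) + exp(i κ_s α·x) f_s(α) ] dσ(α) is a smooth vector field on ℝ³ and satisfies the Navier equation μ Δu_f + (λ+μ) ∇(∇·u_f) + ω² u_f = 0 at every point of ℝ³. -/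
open Real Metric

noncomputable section

/-- The Euclidean space `ℝ³`. -/
abbrev E3 := EuclideanSpace ℝ (Fin 3)

/-- Complex 3-vectors. -/
abbrev V3 := Fin 3 → ℂ

/-- The `j`-th standard basis vector of `ℝ³`. -/
def e3 (j : Fin 3) : E3 := EuclideanSpace.single j 1

/-- The `j`-th partial derivative of a scalar field `f : ℝ³ → ℂ`. -/
def pd (j : Fin 3) (f : E3 → ℂ) : E3 → ℂ := fun x => fderiv ℝ f x (e3 j)

/-- The componentwise Laplacian of a vector field `u : ℝ³ → ℂ³`. -/
def vecLap (u : E3 → V3) : E3 → V3 := fun x i => ∑ j, pd j (pd j (fun y => u y i)) x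

/-- The divergence `∇·u` of a vector field `u : ℝ³ → ℂ³`. -/
def divg (u : E3 → V3) : E3 → ℂ := fun x => ∑ j, pd j (fun y => u y j) x

/-- The gradient `∇f` of a scalar field `f : ℝ³ → ℂ`. -/
def grad (f : E3 → ℂ) : E3 → V3 := fun x j => pd j f x

/-- `u` satisfies the Navier equation `μ Δu + (λ+μ) ∇(∇·u) + ω² u = 0` at the point `x`. -/
def IsNavierSolutionAt (μ lam ω : ℝ) (u : E3 → V3) (x : E3) : Prop :=
  μ • vecLap u x + (lam + μ) • grad (divg u) x + ω ^ 2 • u x = 0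

open MeasureTheory

/-- The surface measure on the unit sphere `S² ⊆ ℝ³` (rotation invariant, total mass `4π`). -/
def sphereMeasure : Measure (sphere (0 : E3) 1) := (volume : Measure E3).toSphere

/-- The elastic Herglotz wave with kernel `(f_p, f_s)`:
`u_f(x) = ∫_{S²} [e^{iκ_p α·x} f_p(α) + e^{iκ_s α·x} f_s(α)] dσ(α)`. -/
def herglotz (κp κs : ℝ) (fp fs : sphere (0 : E3) 1 → V3) : E3 → V3 := fun x =>
  ∫ α : sphere (0 : E3) 1,
    (Complex.exp (Complex.I * (κp : ℂ) * ((inner ℝ (α : E3) x : ℝ) : ℂ)) • fp α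
      + Complex.exp (Complex.I * (κs : ℂ) * ((inner ℝ (α : E3) x : ℝ) : ℂ)) • fs α) ∂sphereMeasure

/-!
A plane wave `x ↦ exp(iκ α·x) v` is smooth and `∂_j` acts on it as multiplication by `iκ α_j`.
The sphere is compact, so differentiation passes under the integral: a Herglotz wave with
continuous density is smooth, and its derivatives are Herglotz waves whose densities are
multiplied by these symbols. Since `|α| = 1`, the Laplacian acts as `-κ²`; on a longitudinal
density `c(α) α` the operator `∇(∇·)` acts as `-κ²` as well, while a transverse density gives a
divergence-free wave. The relations `κ_p² (λ + 2μ) = ω² = κ_s² μ` then make the compressional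
and the shear part each solve the Navier equation, which is linear.
-/

section PlaneWave

variable {E : Type*} [NormedAddCommGroup E] [InnerProductSpace ℝ E]
  {F : Type*} [NormedAddCommGroup F] [NormedSpace ℂ F]

def planeWave (κ : ℝ) (α x : E) : ℂ :=
  Complex.exp (Complex.I * κ * (inner ℝ α x : ℝ))

lemma norm_planeWave (κ : ℝ) (α x : E) : ‖planeWave κ α x‖ = 1 := by
  simp [planeWave, Complex.norm_exp, Complex.mul_re]

@[fun_prop]
lemma continuous_planeWave (κ : ℝ) (x : E) : Continuous fun α : E => planeWave κ α x := by
  unfold planeWave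
  fun_prop

lemma hasFDerivAt_planeWave_smul (κ : ℝ) (α x : E) (v : F) :
    HasFDerivAt (fun y => planeWave κ α y • v)
      ((innerSL ℝ α).smulRight ((Complex.I * κ * planeWave κ α x) • v)) x := by
  have h := ((((Complex.ofRealCLM.comp (innerSL ℝ α)).hasFDerivAt (x := x)).const_mul
    (Complex.I * κ)).cexp).smul_const v
  convert h using 1
  · rfl
  ext y
  simp only [planeWave, ContinuousLinearMap.smulRight_apply, coe_innerSL_apply,
    ← Complex.coe_smul, smul_smul, ContinuousLinearMap.comp_apply, Complex.ofRealCLM_apply,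
    smul_apply, smul_eq_mul]
  congr 1
  ring

lemma continuous_fderiv_planeWave_smul (κ : ℝ) {g : sphere (0 : E) 1 → F} (hg : Continuous g)
    (x : E) :
    Continuous fun α : sphere (0 : E) 1 =>
      (innerSL ℝ (α : E)).smulRight ((Complex.I * κ * planeWave κ (α : E) x) • g α) :=
  isBoundedBilinearMap_smulRight.continuous.comp
    (((innerSL ℝ).continuous.comp continuous_subtype_val).prodMk (by fun_prop))

end PlaneWave

lemma Continuous.integrable_of_compactSpace {X G : Type*} [TopologicalSpace X] [CompactSpace X]
    [MeasurableSpace X] [OpensMeasurableSpace X] [NormedAddCommGroup G] {μ : Measure X}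
    [IsFiniteMeasure μ] {f : X → G} (hf : Continuous f) : Integrable f μ :=
  hf.integrable_of_hasCompactSupport (.of_compactSpace f)

section HerglotzWave

variable {E : Type*} [NormedAddCommGroup E] [InnerProductSpace ℝ E] [MeasurableSpace E]
  {F : Type*} [NormedAddCommGroup F] [NormedSpace ℂ F]

def herglotzWave (ν : Measure (sphere (0 : E) 1)) (κ : ℝ) (g : sphere (0 : E) 1 → F) (x : E) :
    F :=
  ∫ α, planeWave κ (α : E) x • g α ∂ν

variable {ν : Measure (sphere (0 : E) 1)} {κ : ℝ}

lemma herglotzWave_const_smul (c : ℂ) (g : sphere (0 : E) 1 → F) :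
    herglotzWave ν κ (fun α => c • g α) = c • herglotzWave ν κ g := by
  ext x
  simp only [herglotzWave, Pi.smul_apply, smul_comm _ c, integral_smul]

variable [FiniteDimensional ℝ E] [BorelSpace E] [IsFiniteMeasure ν] {g : sphere (0 : E) 1 → F}

lemma integrable_planeWave_smul (hg : Continuous g) (x : E) :
    Integrable (fun α : sphere (0 : E) 1 => planeWave κ (α : E) x • g α) ν :=
  (((continuous_planeWave κ x).comp continuous_subtype_val).smul hg).integrable_of_compactSpace

lemma hasFDerivAt_herglotzWave (hg : Continuous g) (x : E) :
    HasFDerivAt (herglotzWave ν κ g)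
      (∫ α, (innerSL ℝ (α : E)).smulRight ((Complex.I * κ * planeWave κ (α : E) x) • g α) ∂ν)
      x := by
  refine hasFDerivAt_integral_of_dominated_of_fderiv_le (bound := fun α => |κ| * ‖g α‖)
    (s := Set.univ) Filter.univ_mem
    (Filter.Eventually.of_forall fun y => (integrable_planeWave_smul hg y).aestronglyMeasurable)
    (integrable_planeWave_smul hg x) ?_ ?_
    (continuous_const.mul hg.norm).integrable_of_compactSpace
    (ae_of_all _ fun α y _ => hasFDerivAt_planeWave_smul κ (α : E) y (g α))
  · exact (continuous_fderiv_planeWave_smul κ hg x).aestronglyMeasurable_of_compactSpace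
  · refine ae_of_all _ fun α y _ => ?_
    rw [ContinuousLinearMap.norm_smulRight_apply, innerSL_apply_norm, norm_eq_of_mem_sphere α,
      one_mul, norm_smul, norm_mul, norm_planeWave, mul_one, norm_mul, Complex.norm_I, one_mul,
      Complex.norm_real, Real.norm_eq_abs]

lemma fderiv_herglotzWave_apply (hg : Continuous g) (x y : E) :
    fderiv ℝ (herglotzWave ν κ g) x y
      = herglotzWave ν κ (fun α => (Complex.I * κ * (inner ℝ (α : E) y : ℝ)) • g α) x := by
  rw [(hasFDerivAt_herglotzWave hg x).fderiv, ContinuousLinearMap.integral_apply]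
  · refine integral_congr_ae (ae_of_all _ fun α => ?_)
    simp only [ContinuousLinearMap.smulRight_apply, coe_innerSL_apply, ← Complex.coe_smul,
      smul_smul]
    congr 1
    ring
  · exact (continuous_fderiv_planeWave_smul κ hg x).integrable_of_compactSpace

lemma contDiff_herglotzWave {g : sphere (0 : E) 1 → F} (hg : Continuous g) :
    ContDiff ℝ (⊤ : ℕ∞) (herglotzWave ν κ g) := by
  refine contDiff_infty.2 fun n => ?_
  -- every directional derivative is again a Herglotz wave with a continuous density
  induction n generalizing g with
  | zero =>
    exact contDiff_zero.2 <| continuous_iff_continuousAt.2 fun x =>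
      (hasFDerivAt_herglotzWave hg x).continuousAt
  | succ n ih =>
    rw [Nat.cast_succ]
    refine contDiff_succ_iff_fderiv_apply.2
      ⟨fun x => (hasFDerivAt_herglotzWave hg x).differentiableAt, by simp, fun y => ?_⟩
    simp_rw [fderiv_herglotzWave_apply hg]
    exact ih (by fun_prop)

lemma herglotzWave_sum {ι : Type*} (s : Finset ι) {g : ι → sphere (0 : E) 1 → F}
    (hg : ∀ i ∈ s, Continuous (g i)) (x : E) :
    herglotzWave ν κ (fun α => ∑ i ∈ s, g i α) x = ∑ i ∈ s, herglotzWave ν κ (g i) x := by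
  simp only [herglotzWave, Finset.smul_sum]
  exact integral_finsetSum s fun i hi => integrable_planeWave_smul (hg i hi) x

lemma herglotzWave_apply {ι : Type*} [Fintype ι] {g : sphere (0 : E) 1 → ι → ℂ}
    (hg : Continuous g) (x : E) (i : ι) :
    herglotzWave ν κ g x i = herglotzWave ν κ (fun α => g α i) x :=
  eval_integral (fun i => (integrable_planeWave_smul hg x).eval i) i

lemma herglotzWave_eval {ι : Type*} [Fintype ι] {g : sphere (0 : E) 1 → ι → ℂ}
    (hg : Continuous g) (i : ι) :
    (fun x => herglotzWave ν κ g x i) = herglotzWave ν κ (fun α => g α i) :=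
  funext fun x => herglotzWave_apply hg x i

end HerglotzWave

section NavierOperator

lemma pd_add {f g : E3 → ℂ} (hf : Differentiable ℝ f) (hg : Differentiable ℝ g) (j : Fin 3) :
    pd j (f + g) = pd j f + pd j g := by
  ext x
  simp [pd, fderiv_add (hf x) (hg x)]

lemma differentiable_pd {f : E3 → ℂ} (hf : ContDiff ℝ 2 f) (j : Fin 3) :
    Differentiable ℝ (pd j f) :=
  ((hf.fderiv_right (m := 1) (by norm_num)).clm_apply contDiff_const).differentiable one_ne_zero

lemma pd_zero (j : Fin 3) : pd j 0 = 0 := by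
  ext x
  simp [pd]

lemma differentiable_divg {u : E3 → V3} (hu : ContDiff ℝ 2 u) : Differentiable ℝ (divg u) :=
  Differentiable.fun_sum fun j _ => differentiable_pd (contDiff_pi.1 hu j) j

lemma vecLap_add {u v : E3 → V3} (hu : ContDiff ℝ 2 u) (hv : ContDiff ℝ 2 v) :
    vecLap (u + v) = vecLap u + vecLap v := by
  ext x i
  have hui := contDiff_pi.1 hu i
  have hvi := contDiff_pi.1 hv i
  simp only [vecLap, Pi.add_apply, ← Finset.sum_add_distrib]
  refine Finset.sum_congr rfl fun j _ => ?_
  change pd j (pd j ((fun y => u y i) + fun y => v y i)) x = _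
  rw [pd_add (hui.differentiable (by norm_num)) (hvi.differentiable (by norm_num)),
    pd_add (differentiable_pd hui j) (differentiable_pd hvi j)]
  rfl

lemma divg_add {u v : E3 → V3} (hu : Differentiable ℝ u) (hv : Differentiable ℝ v) :
    divg (u + v) = divg u + divg v := by
  ext x
  simp only [divg, Pi.add_apply, ← Finset.sum_add_distrib]
  refine Finset.sum_congr rfl fun j _ => ?_
  change pd j ((fun y => u y j) + fun y => v y j) x = _
  rw [pd_add (differentiable_pi.1 hu j) (differentiable_pi.1 hv j)]
  rfl

lemma grad_add {f g : E3 → ℂ} (hf : Differentiable ℝ f) (hg : Differentiable ℝ g) :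
    grad (f + g) = grad f + grad g := by
  ext x j
  simp [grad, pd_add hf hg]

lemma IsNavierSolutionAt.add {μ lam ω : ℝ} {u v : E3 → V3} {x : E3} (hu : ContDiff ℝ 2 u)
    (hv : ContDiff ℝ 2 v) (hux : IsNavierSolutionAt μ lam ω u x)
    (hvx : IsNavierSolutionAt μ lam ω v x) : IsNavierSolutionAt μ lam ω (u + v) x := by
  unfold IsNavierSolutionAt at *
  rw [vecLap_add hu hv,
    divg_add (hu.differentiable (by norm_num)) (hv.differentiable (by norm_num)),
    grad_add (differentiable_divg hu) (differentiable_divg hv)]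
  simp only [Pi.add_apply, smul_add]
  linear_combination (norm := module) hux + hvx

end NavierOperator

section HerglotzNavier

def complexify (v : E3) : V3 := fun i => (v i : ℂ)

@[fun_prop]
lemma continuous_complexify : Continuous complexify := by
  unfold complexify
  fun_prop

lemma sum_complexify_sq_of_mem_sphere (α : sphere (0 : E3) 1) :
    ∑ j, complexify α j ^ 2 = 1 := by
  have h := EuclideanSpace.real_norm_sq_eq (α : E3)
  rw [norm_eq_of_mem_sphere α, one_pow] at h
  simp only [complexify]
  exact_mod_cast h.symm

lemma sum_smul_complexify_mul_complexify (c : ℂ) (α : sphere (0 : E3) 1) :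
    ∑ j, (c • complexify α) j * complexify α j = c := by
  simp only [Pi.smul_apply, smul_eq_mul, mul_assoc, ← Finset.mul_sum, ← sq,
    sum_complexify_sq_of_mem_sphere, mul_one]

variable {ν : Measure (sphere (0 : E3) 1)} [IsFiniteMeasure ν] {κ : ℝ}

lemma pd_herglotzWave {g : sphere (0 : E3) 1 → ℂ} (hg : Continuous g) (j : Fin 3) :
    pd j (herglotzWave ν κ g)
      = herglotzWave ν κ (fun α => Complex.I * κ * complexify α j * g α) := by
  ext x
  simp [pd, fderiv_herglotzWave_apply hg, e3, EuclideanSpace.inner_single_right, complexify]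

lemma sum_pd_pd_herglotzWave {g : sphere (0 : E3) 1 → ℂ} (hg : Continuous g) (x : E3) :
    ∑ j, pd j (pd j (herglotzWave ν κ g)) x = -(κ ^ 2 : ℂ) * herglotzWave ν κ g x := by
  have hgj (j : Fin 3) : Continuous fun α : sphere (0 : E3) 1 =>
      Complex.I * κ * complexify α j * g α := by fun_prop
  have hsymbol (α : sphere (0 : E3) 1) :
      ∑ j, Complex.I * κ * complexify α j * (Complex.I * κ * complexify α j * g α)
        = -(κ ^ 2 : ℂ) * g α := calc
    _ = ∑ j, complexify α j ^ 2 * (Complex.I * Complex.I * κ ^ 2 * g α) :=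
      Finset.sum_congr rfl fun j _ => by ring
    _ = -(κ ^ 2 : ℂ) * g α := by
      rw [← Finset.sum_mul, sum_complexify_sq_of_mem_sphere, Complex.I_mul_I]
      ring
  simp only [pd_herglotzWave hg, pd_herglotzWave (hgj _)]
  rw [← herglotzWave_sum _ fun j _ => by fun_prop]
  simp only [hsymbol]
  exact congrFun (herglotzWave_const_smul _ g) x

lemma vecLap_herglotzWave {g : sphere (0 : E3) 1 → V3} (hg : Continuous g) (x : E3) :
    vecLap (herglotzWave ν κ g) x = -(κ ^ 2 : ℂ) • herglotzWave ν κ g x := by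
  ext i
  simp only [vecLap, Pi.smul_apply, smul_eq_mul, herglotzWave_eval hg]
  rw [sum_pd_pd_herglotzWave (by fun_prop), ← herglotzWave_eval hg i]

lemma divg_herglotzWave {g : sphere (0 : E3) 1 → V3} (hg : Continuous g) :
    divg (herglotzWave ν κ g)
      = herglotzWave ν κ (fun α => Complex.I * κ * ∑ j, g α j * complexify α j) := by
  ext x
  have hgj (j : Fin 3) : Continuous fun α => g α j := by fun_prop
  simp only [divg, herglotzWave_eval hg, pd_herglotzWave (hgj _)]
  rw [← herglotzWave_sum _ fun j _ => by fun_prop]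
  simp only [Finset.mul_sum, mul_assoc, mul_comm (complexify _ _)]

lemma grad_divg_herglotzWave_longitudinal {c : sphere (0 : E3) 1 → ℂ} (hc : Continuous c)
    (x : E3) :
    grad (divg (herglotzWave ν κ fun α => c α • complexify α)) x
      = -(κ ^ 2 : ℂ) • herglotzWave ν κ (fun α => c α • complexify α) x := by
  have hdiv : divg (herglotzWave ν κ fun α => c α • complexify α)
      = herglotzWave ν κ (fun α => Complex.I * κ * c α) := by
    simp only [divg_herglotzWave (by fun_prop : Continuous fun α => c α • complexify α),
      sum_smul_complexify_mul_complexify]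
  ext j
  rw [grad, hdiv, pd_herglotzWave (by fun_prop), Pi.smul_apply, smul_eq_mul,
    herglotzWave_apply (by fun_prop), ← smul_eq_mul (-(κ : ℂ) ^ 2), ← Pi.smul_apply,
    ← herglotzWave_const_smul]
  congr 1
  ext α
  simp only [Pi.smul_apply, smul_eq_mul]
  linear_combination (κ ^ 2 * complexify α j * c α : ℂ) * Complex.I_mul_I

lemma exists_continuous_eq_smul_complexify {g : sphere (0 : E3) 1 → V3} (hg : Continuous g)
    (hlong : ∀ α, ∃ c : ℂ, g α = c • complexify α) :
    ∃ c : sphere (0 : E3) 1 → ℂ, Continuous c ∧ g = fun α => c α • complexify α :=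
  ⟨fun α => ∑ j, g α j * complexify α j, by fun_prop, funext fun α => by
    obtain ⟨c, hc⟩ := hlong α
    simp only [hc, sum_smul_complexify_mul_complexify]⟩

lemma isNavierSolutionAt_herglotzWave_longitudinal {μ lam ω : ℝ}
    (hκ : κ ^ 2 * (lam + 2 * μ) = ω ^ 2) {g : sphere (0 : E3) 1 → V3} (hg : Continuous g)
    (hlong : ∀ α, ∃ c : ℂ, g α = c • complexify α) (x : E3) :
    IsNavierSolutionAt μ lam ω (herglotzWave ν κ g) x := by
  obtain ⟨c, hc, rfl⟩ := exists_continuous_eq_smul_complexify hg hlong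
  have hκ' : (κ : ℂ) ^ 2 * (lam + 2 * μ) = ω ^ 2 := by exact_mod_cast hκ
  unfold IsNavierSolutionAt
  rw [vecLap_herglotzWave hg, grad_divg_herglotzWave_longitudinal hc]
  generalize herglotzWave ν κ (fun α => c α • complexify α) x = u
  ext i
  simp only [Pi.add_apply, Pi.smul_apply, Pi.zero_apply, smul_eq_mul, Complex.real_smul,
    Complex.ofReal_pow, Complex.ofReal_add]
  linear_combination -u i * hκ'

lemma isNavierSolutionAt_herglotzWave_transverse {μ lam ω : ℝ}
    (hκ : κ ^ 2 * μ = ω ^ 2) {g : sphere (0 : E3) 1 → V3} (hg : Continuous g)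
    (htrans : ∀ α, ∑ j, g α j * complexify α j = 0) (x : E3) :
    IsNavierSolutionAt μ lam ω (herglotzWave ν κ g) x := by
  have hdiv : divg (herglotzWave ν κ g) = 0 := by
    rw [divg_herglotzWave hg]
    ext x : 1
    simp [htrans, herglotzWave]
  unfold IsNavierSolutionAt
  have hgrad : grad 0 x = 0 := funext fun j => congrFun (pd_zero j) x
  have hκ' : (κ : ℂ) ^ 2 * μ = ω ^ 2 := by exact_mod_cast hκ
  rw [vecLap_herglotzWave hg, hdiv, hgrad]
  generalize herglotzWave ν κ g x = u
  ext i
  simp only [Pi.add_apply, Pi.smul_apply, Pi.zero_apply, smul_eq_mul, Complex.real_smul,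
    Complex.ofReal_pow]
  linear_combination -u i * hκ'

end HerglotzNavier

instance : IsFiniteMeasure sphereMeasure := by
  unfold sphereMeasure
  infer_instance

lemma herglotz_eq_add {κp κs : ℝ} {fp fs : sphere (0 : E3) 1 → V3} (hfpc : Continuous fp)
    (hfsc : Continuous fs) :
    herglotz κp κs fp fs = herglotzWave sphereMeasure κp fp + herglotzWave sphereMeasure κs fs :=
  funext fun x =>
    integral_add (integrable_planeWave_smul hfpc x) (integrable_planeWave_smul hfsc x)

theorem stmt_9_general (μ lam ω : ℝ) (hμ : 0 < μ) (hlamμ : 0 < lam + μ)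
    (κp κs : ℝ) (hκp : κp = ω / Real.sqrt (lam + 2 * μ)) (hκs : κs = ω / Real.sqrt μ)
    (fp fs : sphere (0 : E3) 1 → V3)
    (hfpc : Continuous fp) (hfsc : Continuous fs)
    (hfp : ∀ α : sphere (0 : E3) 1, ∃ c : ℂ, fp α = fun i => c * (((α : E3) i : ℝ) : ℂ))
    (hfs : ∀ α : sphere (0 : E3) 1, ∑ j, fs α j * (((α : E3) j : ℝ) : ℂ) = 0) :
    ContDiff ℝ (⊤ : ℕ∞) (herglotz κp κs fp fs) ∧
      ∀ x : E3, IsNavierSolutionAt μ lam ω (herglotz κp κs fp fs) x := by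
  have hκp2 : κp ^ 2 * (lam + 2 * μ) = ω ^ 2 := by
    rw [hκp, div_pow, Real.sq_sqrt (by linarith), div_mul_cancel₀ _ (by linarith)]
  have hκs2 : κs ^ 2 * μ = ω ^ 2 := by
    rw [hκs, div_pow, Real.sq_sqrt hμ.le, div_mul_cancel₀ _ hμ.ne']
  have hup : ContDiff ℝ (⊤ : ℕ∞) (herglotzWave sphereMeasure κp fp) := contDiff_herglotzWave hfpc
  have hus : ContDiff ℝ (⊤ : ℕ∞) (herglotzWave sphereMeasure κs fs) := contDiff_herglotzWave hfsc
  have h2 : (2 : WithTop ℕ∞) ≤ (⊤ : ℕ∞) := WithTop.coe_le_coe.2 le_top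
  rw [herglotz_eq_add hfpc hfsc]
  exact ⟨hup.add hus, fun x =>
    (isNavierSolutionAt_herglotzWave_longitudinal hκp2 hfpc hfp x).add (hup.of_le h2)
      (hus.of_le h2) (isNavierSolutionAt_herglotzWave_transverse hκs2 hfsc hfs x)⟩

/-- If `f_p(α)` is always parallel to `α` and `f_s(α)·α = 0`, with `f_p, f_s` continuous, then
the elastic Herglotz wave is smooth and satisfies the Navier equation everywhere. -/
theorem stmt_9 (μ lam ω : ℝ) (hμ : 0 < μ) (hlamμ : 0 < lam + μ) (hω : 0 < ω)
    (κp κs : ℝ) (hκp : κp = ω / Real.sqrt (lam + 2 * μ)) (hκs : κs = ω / Real.sqrt μ)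
    (fp fs : sphere (0 : E3) 1 → V3)
    (hfpc : Continuous fp) (hfsc : Continuous fs)
    (hfp : ∀ α : sphere (0 : E3) 1, ∃ c : ℂ, fp α = fun i => c * (((α : E3) i : ℝ) : ℂ))
    (hfs : ∀ α : sphere (0 : E3) 1, ∑ j, fs α j * (((α : E3) j : ℝ) : ℂ) = 0) :
    ContDiff ℝ (⊤ : ℕ∞) (herglotz κp κs fp fs) ∧
      ∀ x : E3, IsNavierSolutionAt μ lam ω (herglotz κp κs fp fs) x :=
  stmt_9_general μ lam ω hμ hlamμ κp κs hκp hκs fp fs hfpc hfsc hfp hfs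
end
end

section
/- Let κ > 0 and set j₀(z) = sin z / z and h₀^{(1)}(z) = −i e^{iz}/z for z > 0. Then there exist constants C > 0 and R₀ > 0 such that for all 0 < R < R₀ one has (h₀^{(1)})′(κR) ≠ 0 and | 4πi · j₀′(κR) / (κ · (h₀^{(1)})′(κR)) + (4π/3) κ² R³ | ≤ C · R⁵; that is, the eigenvalue λ_{0,0} = 4πi j₀′(κ_p R)/(κ_p h₀^{(1)′}(κ_p R)) of the n = 0 far field block of a small rigid sphere of radius R satisfies λ_{0,0} = −(4π/3) κ_p² R³ + O(R⁵) as R → 0. -/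
/-!
Put `z = κR`. Then `j₀′(z) = (z cos z − sin z)/z²` and `h₀^{(1)′}(z) = e^{iz}(z + i)/z²`, so the
eigenvalue equals `(4π/κ) (z cos z − sin z) g(z)` with `g(z) = i e^{−iz}/(z + i)`, while
`(4π/3) κ² R³ = (4π/κ) z³/3`. The Taylor bounds for `sin` and `cos` give
`z cos z − sin z = −z³/3 + O(z⁵)`; moreover `|g| ≤ 1` and `g = 1 + O(z²)`, because
`i e^{−iz} − z − i = i (e^{−iz} − 1 + iz)`. Hence the sum is `(4π/κ) O(z⁵) = O(R⁵)`.
-/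

open Real

noncomputable section

/-- The spherical Bessel function of order zero, `j₀(z) = sin z / z`. -/
def sphBesselJ0 : ℝ → ℝ := fun z => Real.sin z / z

/-- The spherical Hankel function of the first kind of order zero, `h₀^{(1)}(z) = −i e^{iz}/z`. -/
def sphHankelH10 : ℝ → ℂ := fun z => -Complex.I * Complex.exp (Complex.I * z) / z

theorem hasDerivAt_sphBesselJ0 {z : ℝ} (hz : z ≠ 0) :
    HasDerivAt sphBesselJ0 ((z * cos z - sin z) / z ^ 2) z :=
  ((hasDerivAt_sin z).div (hasDerivAt_id' z) hz).congr_deriv (by ring)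

theorem abs_mul_cos_sub_sin_add_cube_div_three_le {z : ℝ} (hz : |z| ≤ 1) :
    |z * cos z - sin z + z ^ 3 / 3| ≤ |z| ^ 5 := by
  calc |z * cos z - sin z + z ^ 3 / 3|
      = |z * (cos z - (1 - z ^ 2 / 2)) - (sin z - (z - z ^ 3 / 6))| := by ring_nf
    _ ≤ |z| * (|z| ^ 4 * (5 / 96)) + |z| ^ 5 / 100 := by
      refine (abs_sub _ _).trans (add_le_add ?_ (sin_bound hz))
      rw [abs_mul]
      gcongr
      exact cos_bound hz
    _ ≤ |z| ^ 5 := by nlinarith [pow_nonneg (abs_nonneg z) 5]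

section

open Complex

theorem one_le_norm_ofReal_add_I (z : ℝ) : 1 ≤ ‖(z : ℂ) + I‖ := by
  simpa using abs_im_le_norm ((z : ℂ) + I)

theorem ofReal_add_I_ne_zero (z : ℝ) : (z : ℂ) + I ≠ 0 :=
  norm_pos_iff.mp (one_pos.trans_le (one_le_norm_ofReal_add_I z))

theorem hasDerivAt_sphHankelH10 {z : ℝ} (hz : z ≠ 0) :
    HasDerivAt sphHankelH10 (exp (z * I) * (z + I) / (z : ℂ) ^ 2) z := by
  have hofReal : HasDerivAt (fun t : ℝ => (t : ℂ)) 1 z := ofRealCLM.hasDerivAt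
  have hexp : HasDerivAt (fun t : ℝ => exp (I * t)) (exp (I * z) * (I * 1)) z :=
    (hofReal.const_mul I).cexp
  refine ((hexp.const_mul (-I)).div hofReal (ofReal_ne_zero.mpr hz)).congr_deriv ?_
  rw [mul_comm I]
  linear_combination (-(exp (z * I)) * z / (z : ℂ) ^ 2) * I_sq

theorem deriv_sphHankelH10_ne_zero {z : ℝ} (hz : z ≠ 0) : deriv sphHankelH10 z ≠ 0 := by
  rw [(hasDerivAt_sphHankelH10 hz).deriv]
  exact div_ne_zero (mul_ne_zero (exp_ne_zero _) (ofReal_add_I_ne_zero z))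
    (pow_ne_zero _ (ofReal_ne_zero.mpr hz))

theorem four_pi_I_mul_deriv_sphBesselJ0_div (κ : ℝ) {z : ℝ} (hz : z ≠ 0) :
    4 * (π : ℂ) * I * ((deriv sphBesselJ0 z : ℝ) : ℂ) / (κ * deriv sphHankelH10 z)
      = ((4 * π / κ : ℝ) : ℂ)
          * ((z * Real.cos z - Real.sin z : ℝ) * (I * exp (-(z * I)) / (z + I))) := by
  rw [(hasDerivAt_sphBesselJ0 hz).deriv, (hasDerivAt_sphHankelH10 hz).deriv, Complex.exp_neg]
  push_cast
  field_simp [Complex.exp_ne_zero, ofReal_add_I_ne_zero, ofReal_ne_zero.mpr hz]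

theorem norm_I_mul_exp_div_ofReal_add_I_le_one (z : ℝ) :
    ‖I * exp (-(z * I)) / (z + I)‖ ≤ 1 := by
  rw [norm_div, norm_mul, norm_I, norm_exp]
  simp only [neg_re, mul_re, ofReal_re, I_re, mul_zero, ofReal_im, I_im, mul_one, sub_self,
    neg_zero, Real.exp_zero]
  exact div_le_one_of_le₀ (one_le_norm_ofReal_add_I z) (norm_nonneg _)

theorem norm_I_mul_exp_div_ofReal_add_I_sub_one_le {z : ℝ} (hz : |z| ≤ 1) :
    ‖I * exp (-(z * I)) / (z + I) - 1‖ ≤ z ^ 2 := by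
  have hw : ‖-((z : ℂ) * I)‖ = |z| := by simp
  have hexp := norm_exp_sub_one_sub_id_le (hw ▸ hz : ‖-((z : ℂ) * I)‖ ≤ 1)
  rw [hw, sq_abs] at hexp
  have hnum : I * exp (-(z * I)) / (z + I) - 1
      = I * (exp (-(z * I)) - 1 - -(z * I)) / (z + I) := by
    field_simp [ofReal_add_I_ne_zero]
    linear_combination (-z : ℂ) * I_sq
  rw [hnum, norm_div, norm_mul, norm_I, one_mul]
  exact div_le_of_le_mul₀ (norm_nonneg _) (sq_nonneg _)
    (hexp.trans (le_mul_of_one_le_right (sq_nonneg _) (one_le_norm_ofReal_add_I z)))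

theorem norm_mul_cos_sub_sin_mul_add_cube_div_three_le {z : ℝ} (hz : |z| ≤ 1) :
    ‖((z * Real.cos z - Real.sin z : ℝ) : ℂ) * (I * exp (-(z * I)) / (z + I)) + (z : ℂ) ^ 3 / 3‖
      ≤ 4 / 3 * |z| ^ 5 := by
  set g := I * exp (-(z * I)) / (z + I)
  have hsplit : ((z * Real.cos z - Real.sin z : ℝ) : ℂ) * g + (z : ℂ) ^ 3 / 3
      = ((z * Real.cos z - Real.sin z + z ^ 3 / 3 : ℝ) : ℂ) * g
        - ((z ^ 3 / 3 : ℝ) : ℂ) * (g - 1) := by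
    push_cast; ring
  have hcube : ‖((z ^ 3 / 3 : ℝ) : ℂ)‖ = |z| ^ 3 / 3 := by
    rw [norm_real, Real.norm_eq_abs, abs_div, abs_pow, abs_of_pos (three_pos : (0 : ℝ) < 3)]
  calc _ ≤ ‖((z * Real.cos z - Real.sin z + z ^ 3 / 3 : ℝ) : ℂ)‖ * ‖g‖
        + ‖((z ^ 3 / 3 : ℝ) : ℂ)‖ * ‖g - 1‖ := by
        rw [hsplit, ← norm_mul, ← norm_mul]
        exact norm_sub_le _ _
    _ ≤ |z| ^ 5 * 1 + |z| ^ 3 / 3 * z ^ 2 := by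
        rw [norm_real, Real.norm_eq_abs, hcube]
        gcongr
        · exact abs_mul_cos_sub_sin_add_cube_div_three_le hz
        · exact norm_I_mul_exp_div_ofReal_add_I_le_one z
        · exact norm_I_mul_exp_div_ofReal_add_I_sub_one_le hz
    _ = 4 / 3 * |z| ^ 5 := by rw [← sq_abs]; ring

end

/-- Small-radius asymptotics of the `n = 0` eigenvalue:
`4πi j₀′(κR)/(κ h₀^{(1)′}(κR)) = −(4π/3) κ² R³ + O(R⁵)`. -/
theorem stmt_17 (κ : ℝ) (hκ : 0 < κ) :
    ∃ C > (0 : ℝ), ∃ R₀ > (0 : ℝ), ∀ R : ℝ, 0 < R → R < R₀ →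
      deriv sphHankelH10 (κ * R) ≠ 0 ∧
      ‖(4 * (π : ℂ) * Complex.I * ((deriv sphBesselJ0 (κ * R) : ℝ) : ℂ)
            / ((κ : ℂ) * deriv sphHankelH10 (κ * R))
          + ((4 * π / 3 : ℝ) : ℂ) * (κ : ℂ) ^ 2 * (R : ℂ) ^ 3)‖
        ≤ C * R ^ 5 := by
  refine ⟨16 * π / 3 * κ ^ 4, by positivity, 1 / κ, by positivity, fun R hR hRR₀ => ?_⟩
  have hz : 0 < κ * R := mul_pos hκ hR
  have hz1 : |κ * R| ≤ 1 := by
    rw [abs_of_pos hz]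
    exact ((lt_div_iff₀' hκ).mp hRR₀).le
  refine ⟨deriv_sphHankelH10_ne_zero hz.ne', ?_⟩
  have hcube : ((4 * π / 3 : ℝ) : ℂ) * (κ : ℂ) ^ 2 * (R : ℂ) ^ 3
      = ((4 * π / κ : ℝ) : ℂ) * (((κ * R : ℝ) : ℂ) ^ 3 / 3) := by
    push_cast
    field_simp [hκ.ne']
  rw [four_pi_I_mul_deriv_sphBesselJ0_div κ hz.ne', hcube, ← mul_add, norm_mul]
  calc _ ≤ ‖((4 * π / κ : ℝ) : ℂ)‖ * (4 / 3 * |κ * R| ^ 5) :=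
        mul_le_mul_of_nonneg_left (norm_mul_cos_sub_sin_mul_add_cube_div_three_le hz1)
          (norm_nonneg _)
    _ = 16 * π / 3 * κ ^ 4 * R ^ 5 := by
        rw [abs_of_pos hz, Complex.norm_real, Real.norm_eq_abs, abs_of_pos (by positivity)]
        field_simp
        norm_num
end
end
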